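/- arXiv:1110.5029 — 4 statements merged into one kernel-verified Lean document; each statement's English description precedes it below -/
import Mathlib

section
/- Let Γ be the free group of rank 2 with generators s₁, s₂. The map φ : (ℤ/2ℤ)^Γ → (ℤ/2ℤ × ℤ/2ℤ)^Γ defined by φ(x)(g) = (x(g) + x(g·s₁), x(g) + x(g·s₂)) is a surjective group homomorphism (with respect to pointwise addition) which is equivariant with respect to the shift actions of Γ. -/
/-- The shift action of the free group `Γ` on `K^Γ`: `(g • x)(f) = x(g⁻¹ f)`. -/
def shiftAct {K : Type*} (g : FreeGroup (Fin 2)) (x : FreeGroup (Fin 2) → K) :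
    FreeGroup (Fin 2) → K := fun f => x (g⁻¹ * f)

/-- The Ornstein–Weiss map `φ(x)(g) = (x(g)+x(g s₁), x(g)+x(g s₂))`. -/
def phiOW (x : FreeGroup (Fin 2) → ZMod 2) : FreeGroup (Fin 2) → ZMod 2 × ZMod 2 :=
  fun g => (x g + x (g * FreeGroup.of 0), x g + x (g * FreeGroup.of 1))

/-!
Every edge labelling of the Cayley tree of a free group is the coboundary of a vertex
labelling: prescribing `x (g * of i) - x g` for all `g` and generators `i` determines a
function `x` (up to its value at `1`), because the prescription is a cocycle on the free
generators, and such a cocycle extends uniquely to a homomorphism into a semidirect product.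
Applied to `ZMod 2`, where `x g + x (g * sᵢ) = x (g * sᵢ) - x g`, this makes `φ` surjective;
additivity and equivariance are immediate from the formula.
-/

open FreeGroup

theorem FreeGroup.exists_add_of_mul_of {α A : Type*} [AddGroup A] (c : FreeGroup α → α → A) :
    ∃ x : FreeGroup α → A, ∀ g i, x (g * of i) = x g + c g i := by
  let φ : FreeGroup α →* MulAut (FreeGroup α → Multiplicative A) := mulAutArrow
  -- `w ↦ (Ψ w).left` is a cocycle for the shift action; its value at `1` is the primitive.
  let Ψ : FreeGroup α →* (FreeGroup α → Multiplicative A) ⋊[φ] FreeGroup α :=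
    FreeGroup.lift fun i => ⟨fun f => Multiplicative.ofAdd (c f⁻¹ i), of i⟩
  have right_Ψ (w : FreeGroup α) : (Ψ w).right = w :=
    DFunLike.congr_fun (FreeGroup.ext_hom (f := SemidirectProduct.rightHom.comp Ψ)
      (g := MonoidHom.id _) fun i => by simp [Ψ]) w
  refine ⟨fun w => Multiplicative.toAdd ((Ψ w).left 1), fun g i => ?_⟩
  show Multiplicative.toAdd ((Ψ (g * of i)).left 1) = Multiplicative.toAdd ((Ψ g).left 1) + c g i
  rw [_root_.map_mul, SemidirectProduct.mul_left, right_Ψ, Pi.mul_apply, toAdd_mul]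
  have shifted_edge : φ g (Ψ (of i)).left 1 = Multiplicative.ofAdd (c (g⁻¹ * 1)⁻¹ i) := by
    simp only [Ψ, lift_apply_of]; rfl
  rw [shifted_edge, toAdd_ofAdd, mul_one, inv_inv]

theorem phiOW_add (x y : FreeGroup (Fin 2) → ZMod 2) : phiOW (x + y) = phiOW x + phiOW y := by
  funext g
  simp only [phiOW, Pi.add_apply, Prod.mk_add_mk]
  congr 1 <;> abel

theorem phiOW_shiftAct (g : FreeGroup (Fin 2)) (x : FreeGroup (Fin 2) → ZMod 2) :
    phiOW (shiftAct g x) = shiftAct g (phiOW x) := by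
  funext f
  simp only [phiOW, shiftAct, mul_assoc]

theorem phiOW_surjective : Function.Surjective phiOW := by
  intro y
  obtain ⟨x, hx⟩ := FreeGroup.exists_add_of_mul_of fun g (i : Fin 2) => ![(y g).1, (y g).2] i
  refine ⟨x, funext fun g => ?_⟩
  have add_add_self_left (a b : ZMod 2) : a + (a + b) = b := by
    rw [← add_assoc, CharTwo.add_self_eq_zero, zero_add]
  simp [phiOW, hx, add_add_self_left]

/-- `φ` is a surjective homomorphism (for pointwise addition), equivariant
with respect to the shift actions of the free group of rank 2. -/
theorem phiOW_surjective_hom_equivariant :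
    Function.Surjective phiOW ∧
    (∀ x y : FreeGroup (Fin 2) → ZMod 2, phiOW (x + y) = phiOW x + phiOW y) ∧
    (∀ (g : FreeGroup (Fin 2)) (x : FreeGroup (Fin 2) → ZMod 2),
      phiOW (shiftAct g x) = shiftAct g (phiOW x)) :=
  ⟨phiOW_surjective, phiOW_add, phiOW_shiftAct⟩
end

section
/- Let Γ be a free group of finite rank with free generating set S and Cayley graph C (vertex set Γ, edges {g, gs} for g ∈ Γ, s ∈ S). Let K ⊂ Γ be a finite connected subset of radius r ≥ 1 whose center is the identity element e (i.e., r is the smallest number such that some ball of radius r contains K, and B(e,r) ⊇ K). Then there exist elements v, w ∈ K with |v| = r, |w| ∈ {r-1, r}, and [e,v] ∩ [e,w] = {e}, where [a,b] denotes the geodesic segment between a and b in the Cayley graph. -/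
/-- Word length of an element of the free group with respect to the free generators. -/
def wordLen {r : ℕ} (g : FreeGroup (Fin r)) : ℕ := g.toWord.length

/-- The Cayley graph of the free group of rank `r`, with edges `{g, g·sᵢ}`. -/
def cayley (r : ℕ) : SimpleGraph (FreeGroup (Fin r)) where
  Adj g h := g ≠ h ∧ ∃ i : Fin r, h = g * FreeGroup.of i ∨ g = h * FreeGroup.of i
  symm := by
    constructor
    rintro g h ⟨hne, i, hi⟩
    exact ⟨hne.symm, i, hi.symm⟩
  loopless := by constructor; rintro g ⟨hne, -⟩; exact hne rfl

/-- A subset of the free group is connected if its induced subgraph in the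
Cayley graph is connected. -/
def ConnSet {r : ℕ} (K : Set (FreeGroup (Fin r))) : Prop :=
  ((cayley r).induce K).Connected

/-- The ball of radius `n` centered at `v` in the word metric. -/
def wball {r : ℕ} (v : FreeGroup (Fin r)) (n : ℕ) : Set (FreeGroup (Fin r)) :=
  {g | wordLen (v⁻¹ * g) ≤ n}

/-- `n` is the radius of `K`: the smallest number such that some ball of
radius `n` contains `K`. -/
def IsRadius {r : ℕ} (K : Set (FreeGroup (Fin r))) (n : ℕ) : Prop :=
  (∃ v, K ⊆ wball v n) ∧ ∀ m : ℕ, (∃ v, K ⊆ wball v m) → n ≤ m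

/-- The geodesic segment `[v,w]`: all points on the shortest path from `v` to `w`. -/
def seg {r : ℕ} (v w : FreeGroup (Fin r)) : Set (FreeGroup (Fin r)) :=
  {g | wordLen (v⁻¹ * g) + wordLen (g⁻¹ * w) = wordLen (v⁻¹ * w)}

/-- The extreme points of `K`: elements of `K` of degree 1 in the induced subgraph. -/
def extremePts {r : ℕ} (K : Set (FreeGroup (Fin r))) : Set (FreeGroup (Fin r)) :=
  {f ∈ K | ∃! k, k ∈ K ∧ (cayley r).Adj f k}

/-- `H` is the convex hull of `F`: the smallest connected set containing `F`. -/
def IsHull {r : ℕ} (F H : Set (FreeGroup (Fin r))) : Prop :=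
  ConnSet H ∧ F ⊆ H ∧ ∀ C, ConnSet C → F ⊆ C → H ⊆ C

/-!
A point of `K` at distance `rad` from the centre exists by minimality of the radius; let `l` be the
first letter of its reduced word. If the theorem failed, every point of `K` of length at least
`rad - 1` would share a nonempty geodesic prefix with it and hence start with `l`. Moving the
centre one step along `l` shortens these points by one, and lengthens the remaining (shorter)
points by at most one, so `K` would fit in a ball of radius `rad - 1`.
-/

open FreeGroup

variable {r : ℕ}

lemma mem_wball_one {g : FreeGroup (Fin r)} {n : ℕ} : g ∈ wball 1 n ↔ wordLen g ≤ n := by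
  simp [wball]

lemma left_mem_seg (v w : FreeGroup (Fin r)) : v ∈ seg v w := by
  simp [seg, wordLen]

lemma toWord_isPrefix_of_mem_seg_one {x v : FreeGroup (Fin r)} (hx : x ∈ seg 1 v) :
    x.toWord <+: v.toWord := by
  simp only [seg, inv_one, one_mul, Set.mem_ofPred_eq, wordLen] at hx
  have hsub := toWord_mul_sublist x (x⁻¹ * v)
  rw [mul_inv_cancel_left] at hsub
  exact ⟨_, (hsub.eq_of_length (by simp [hx])).symm⟩

lemma toWord_head?_eq_of_mem_seg_one {x v : FreeGroup (Fin r)} (hx : x ∈ seg 1 v) (hx1 : x ≠ 1) :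
    v.toWord.head? = x.toWord.head? := by
  obtain ⟨a, t, hxa⟩ := List.exists_cons_of_ne_nil (mt toWord_eq_nil_iff.mp hx1)
  obtain ⟨s, hs⟩ := toWord_isPrefix_of_mem_seg_one hx
  rw [← hs, hxa]
  rfl

lemma seg_one_inter_seg_one_of_head?_ne {v w : FreeGroup (Fin r)}
    (h : v.toWord.head? ≠ w.toWord.head?) : seg 1 v ∩ seg 1 w = {1} := by
  refine Set.eq_singleton_iff_unique_mem.mpr ⟨⟨left_mem_seg 1 v, left_mem_seg 1 w⟩, ?_⟩
  rintro x ⟨hxv, hxw⟩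
  by_contra hx1
  exact h (by rw [toWord_head?_eq_of_mem_seg_one hxv hx1, toWord_head?_eq_of_mem_seg_one hxw hx1])

lemma wordLen_inv_mk_mul_add_one_le {g : FreeGroup (Fin r)} {l : Fin r × Bool}
    (hl : g.toWord.head? = some l) : wordLen ((mk [l])⁻¹ * g) + 1 ≤ wordLen g := by
  obtain ⟨t, ht⟩ := List.head?_eq_some_iff.mp hl
  have hg : g = mk [l] * mk t := by rw [mul_mk, List.singleton_append, ← ht, mk_toWord]
  have hlen : wordLen g = t.length + 1 := by simp [wordLen, ht]
  rw [hlen, hg, inv_mul_cancel_left]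
  exact Nat.add_le_add_right norm_mk_le 1

lemma wordLen_inv_mk_mul_le (g : FreeGroup (Fin r)) (l : Fin r × Bool) :
    wordLen ((mk [l])⁻¹ * g) ≤ wordLen g + 1 := by
  calc wordLen ((mk [l])⁻¹ * g) ≤ norm (mk [l])⁻¹ + norm g := norm_mul_le _ _
    _ ≤ wordLen g + 1 := by rw [norm_inv_eq, add_comm]; exact Nat.add_le_add_left norm_mk_le _

lemma subset_wball_mk_of_head?_eq {K : Set (FreeGroup (Fin r))} {n : ℕ} {l : Fin r × Bool}
    (hK : K ⊆ wball 1 (n + 1)) (hl : ∀ g ∈ K, n ≤ wordLen g → g.toWord.head? = some l) :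
    K ⊆ wball (mk [l]) n := by
  intro g hg
  have hgn := mem_wball_one.mp (hK hg)
  show wordLen ((mk [l])⁻¹ * g) ≤ n
  by_cases hlong : n ≤ wordLen g
  · have := wordLen_inv_mk_mul_add_one_le (hl g hg hlong)
    omega
  · have := wordLen_inv_mk_mul_le g l
    omega

lemma exists_wordLen_eq_of_isRadius {K : Set (FreeGroup (Fin r))} {n : ℕ}
    (hrad : IsRadius K (n + 1)) (hK : K ⊆ wball 1 (n + 1)) : ∃ v ∈ K, wordLen v = n + 1 := by
  by_contra! hlt
  have hsub : K ⊆ wball 1 n := fun g hg => by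
    have hle := mem_wball_one.mp (hK hg)
    have hne := hlt g hg
    exact mem_wball_one.mpr (by omega)
  have := hrad.2 n ⟨1, hsub⟩
  omega

theorem exists_two_extremal_directions_general {r : ℕ} (K : Set (FreeGroup (Fin r)))
    (rad : ℕ) (hrad : IsRadius K rad)
    (hrad1 : 1 ≤ rad) (hcenter : K ⊆ wball 1 rad) :
    ∃ v ∈ K, ∃ w ∈ K, wordLen v = rad ∧ (wordLen w = rad - 1 ∨ wordLen w = rad) ∧
      seg 1 v ∩ seg 1 w = {1} := by
  obtain ⟨n, rfl⟩ : ∃ n, rad = n + 1 := ⟨rad - 1, by omega⟩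
  obtain ⟨v, hvK, hv⟩ := exists_wordLen_eq_of_isRadius hrad hcenter
  obtain ⟨l, hl⟩ : ∃ l, v.toWord.head? = some l := by
    refine Option.ne_none_iff_exists'.mp fun h => ?_
    simp [List.head?_eq_none_iff.mp h, wordLen] at hv
  by_contra! hcon
  have hfirst : ∀ g ∈ K, n ≤ wordLen g → g.toWord.head? = some l := fun g hg hgn => by
    have hgle := mem_wball_one.mp (hcenter hg)
    rw [← hl]
    by_contra hne
    exact hcon v hvK g hg hv (by omega) (seg_one_inter_seg_one_of_head?_ne (Ne.symm hne))
  have := hrad.2 n ⟨_, subset_wball_mk_of_head?_eq hcenter hfirst⟩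
  omega

/-- a finite connected set `K` of radius `rad ≥ 1` centered at the
identity contains elements `v, w` with `|v| = rad`, `|w| ∈ {rad-1, rad}` and
`[e,v] ∩ [e,w] = {e}`. -/
theorem exists_two_extremal_directions {r : ℕ} (K : Set (FreeGroup (Fin r)))
    (hKfin : K.Finite) (hKconn : ConnSet K) (rad : ℕ) (hrad : IsRadius K rad)
    (hrad1 : 1 ≤ rad) (hcenter : K ⊆ wball 1 rad) :
    ∃ v ∈ K, ∃ w ∈ K, wordLen v = rad ∧ (wordLen w = rad - 1 ∨ wordLen w = rad) ∧
      seg 1 v ∩ seg 1 w = {1} :=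
  exists_two_extremal_directions_general K rad hrad hrad1 hcenter
end

section
/- Let Γ be a free group of finite rank with Cayley graph C. Let K ⊂ Γ be a finite connected set of radius r ≥ 1 with the identity e as a center. If g₁,...,g_n ∈ Γ \ {e} satisfy K ⊆ ⋃_{i=1}^n g_i·K, then e is contained in the convex hull of {g₁,...,g_n}. -/
open scoped Pointwise

/-! If `1 ∉ H`, then `H` is a connected set of nontrivial elements, and Cayley-adjacent
nontrivial elements of a free group begin with the same letter, so every `gᵢ` begins with one
letter `ℓ`. Multiplying by `gᵢ⁻¹` then lengthens every word that does not begin with `ℓ`,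
while `ℓ⁻¹` shortens those that do; playing these against `K ⊆ ⋃ gᵢ K ⊆ B(1, rad)` puts `K`
inside `B(ℓ, rad - 1)`, contradicting the minimality of the radius. -/

namespace FreeGroup

variable {α : Type*} [DecidableEq α]

theorem norm_pos_iff {x : FreeGroup α} : 0 < norm x ↔ x ≠ 1 :=
  Nat.pos_iff_ne_zero.trans norm_eq_zero.not

theorem toWord_mul_of_isReduced_append {x y : FreeGroup α}
    (h : IsReduced (x.toWord ++ y.toWord)) : (x * y).toWord = x.toWord ++ y.toWord := by
  rw [toWord_mul, h.reduce_eq]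

theorem toWord_inv_mul_of_head?_ne {u y : FreeGroup α} (h : y.toWord.head? ≠ u.toWord.head?) :
    (u⁻¹ * y).toWord = invRev u.toWord ++ y.toWord := by
  rw [← toWord_inv]
  refine toWord_mul_of_isReduced_append (isReduced_toWord.append isReduced_toWord ?_)
  rintro ⟨a, b⟩ ha ⟨c, d⟩ hc rfl
  rw [toWord_inv, invRev, List.getLast?_reverse, List.head?_map] at ha
  simp only [Option.map_eq_some_iff, Prod.exists, Prod.mk.injEq, Option.mem_def] at ha hc
  obtain ⟨a, b', hu, rfl, rfl⟩ := ha
  rw [hu, hc] at h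
  dsimp only
  exact (Bool.eq_not_iff.mpr fun hd => h (by rw [hd])).symm

theorem norm_inv_mul_of_head?_ne {u y : FreeGroup α} (h : y.toWord.head? ≠ u.toWord.head?) :
    norm (u⁻¹ * y) = norm u + norm y := by
  simp [norm, toWord_inv_mul_of_head?_ne h]

theorem toWord_head?_eq_of_norm_inv_mul_le_one {u v : FreeGroup α} (hu : u ≠ 1) (hv : v ≠ 1)
    (h : norm (u⁻¹ * v) ≤ 1) : u.toWord.head? = v.toWord.head? := by
  by_contra hne
  rw [norm_inv_mul_of_head?_ne (Ne.symm hne)] at h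
  have := norm_pos_iff.mpr hu
  have := norm_pos_iff.mpr hv
  omega

theorem toWord_mk_singleton (ℓ : α × Bool) : (mk [ℓ]).toWord = [ℓ] := by
  rw [toWord_mk, reduce_singleton]

theorem norm_mk_singleton_inv_mul_add_one {ℓ : α × Bool} {z : FreeGroup α}
    (h : z.toWord.head? = some ℓ) : norm ((mk [ℓ])⁻¹ * z) + 1 = norm z := by
  obtain ⟨t, ht⟩ := List.head?_eq_some_iff.mp h
  have hz : z = mk [ℓ] * mk t := by rw [← mk_toWord (x := z), ht, mul_mk]; rfl
  have ht_red : IsReduced t := (ht ▸ isReduced_toWord : IsReduced (ℓ :: t)).tail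
  rw [hz, inv_mul_cancel_left, norm, toWord_mk, ht_red.reduce_eq, norm, ← hz, ht,
    List.length_cons]

end FreeGroup

theorem exists_inv_mul_mem_of_subset_iUnion_smul {G ι : Type*} [Group G] {K : Set G}
    {g : ι → G} (hcover : K ⊆ ⋃ i, g i • K) {z : G} (hz : z ∈ K) : ∃ i, (g i)⁻¹ * z ∈ K := by
  obtain ⟨i, hi⟩ := Set.mem_iUnion.mp (hcover hz)
  exact ⟨i, Set.mem_smul_set_iff_inv_smul_mem.mp hi⟩

namespace FreeGroup

variable {α ι : Type*} [DecidableEq α] {K : Set (FreeGroup α)} {ρ : ℕ} {g : ι → FreeGroup α}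
  {ℓ : α × Bool}

theorem norm_lt_of_subset_iUnion_smul_of_head?_ne (hK : ∀ z ∈ K, norm z ≤ ρ)
    (hg : ∀ i, (g i).toWord.head? = some ℓ) (hcover : K ⊆ ⋃ i, g i • K) {w : FreeGroup α}
    (hw : w ∈ K) (hwℓ : w.toWord.head? ≠ some ℓ) : norm w < ρ := by
  obtain ⟨i, hi⟩ := exists_inv_mul_mem_of_subset_iUnion_smul hcover hw
  have hgi : g i ≠ 1 := fun h => by simpa [h] using hg i
  calc norm w < norm (g i) + norm w := Nat.lt_add_of_pos_left (norm_pos_iff.mpr hgi)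
    _ = norm ((g i)⁻¹ * w) := (norm_inv_mul_of_head?_ne (by rwa [hg i])).symm
    _ ≤ ρ := hK _ hi

theorem norm_mk_singleton_inv_mul_lt_of_subset_iUnion_smul (hK : ∀ z ∈ K, norm z ≤ ρ)
    (hg : ∀ i, (g i).toWord.head? = some ℓ) (hcover : K ⊆ ⋃ i, g i • K) {z : FreeGroup α}
    (hz : z ∈ K) : norm ((mk [ℓ])⁻¹ * z) < ρ := by
  by_cases hzℓ : z.toWord.head? = some ℓ
  · have := norm_mk_singleton_inv_mul_add_one hzℓ
    have := hK z hz
    omega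
  obtain ⟨i, hi⟩ := exists_inv_mul_mem_of_subset_iUnion_smul hcover hz
  have hℓz : z.toWord.head? ≠ (mk [ℓ]).toWord.head? := by rwa [toWord_mk_singleton]
  -- `ℓ` is the only `gᵢ` of length one, and for it `ℓ⁻¹ z ∈ K` begins with `ℓ⁻¹`
  by_cases hgi : g i = mk [ℓ]
  · refine norm_lt_of_subset_iUnion_smul_of_head?_ne hK hg hcover (hgi ▸ hi) ?_
    rw [toWord_inv_mul_of_head?_ne hℓz, toWord_mk_singleton]
    simp [invRev, Prod.ext_iff]
  · have h2 : 2 ≤ norm (g i) := by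
      have := norm_mk_singleton_inv_mul_add_one (hg i)
      have := norm_pos_iff.mpr (mt inv_mul_eq_one.mp (Ne.symm hgi))
      omega
    have h1 : norm (mk [ℓ]) = 1 := by rw [norm, toWord_mk_singleton, List.length_singleton]
    have := norm_inv_mul_of_head?_ne hℓz
    have := norm_inv_mul_of_head?_ne (u := g i) (y := z) (by rwa [hg i])
    have := hK _ hi
    omega

end FreeGroup

theorem SimpleGraph.Preconnected.apply_eq_of_forall_adj {V β : Type*} {G : SimpleGraph V}
    (hG : G.Preconnected) {f : V → β} (hf : ∀ u v, G.Adj u v → f u = f v) (u v : V) :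
    f u = f v := by
  obtain ⟨p⟩ := hG u v
  induction p with
  | nil => rfl
  | cons hadj _ ih => exact (hf _ _ hadj).trans ih

theorem norm_inv_mul_eq_one_of_cayley_adj {r : ℕ} {u v : FreeGroup (Fin r)}
    (h : (cayley r).Adj u v) : FreeGroup.norm (u⁻¹ * v) = 1 := by
  obtain ⟨-, i, rfl | rfl⟩ := h <;> simp

theorem ConnSet.toWord_head?_eq {r : ℕ} {H : Set (FreeGroup (Fin r))} (hH : ConnSet H)
    (h1 : (1 : FreeGroup (Fin r)) ∉ H) {u v : FreeGroup (Fin r)} (hu : u ∈ H) (hv : v ∈ H) :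
    u.toWord.head? = v.toWord.head? := by
  refine hH.preconnected.apply_eq_of_forall_adj (f := fun x : H => x.1.toWord.head?)
    (fun x y hxy => ?_) ⟨u, hu⟩ ⟨v, hv⟩
  exact FreeGroup.toWord_head?_eq_of_norm_inv_mul_le_one (ne_of_mem_of_not_mem x.2 h1)
    (ne_of_mem_of_not_mem y.2 h1) (norm_inv_mul_eq_one_of_cayley_adj hxy).le

theorem center_mem_hull_of_cover_general {r n : ℕ} (K : Set (FreeGroup (Fin r)))
    (rad : ℕ) (hrad : IsRadius K rad)
    (hrad1 : 1 ≤ rad) (hcenter : K ⊆ wball 1 rad)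
    (g : Fin n → FreeGroup (Fin r))
    (hcover : K ⊆ ⋃ i, g i • K) :
    ∀ H, IsHull (Set.range g) H → (1 : FreeGroup (Fin r)) ∈ H := by
  rintro H ⟨hH, hgH, -⟩
  by_contra h1
  obtain ⟨⟨h, hh⟩⟩ := hH.nonempty
  obtain ⟨ℓ, hℓ⟩ : ∃ ℓ, h.toWord.head? = some ℓ :=
    Option.ne_none_iff_exists'.mp (by simpa using ne_of_mem_of_not_mem hh h1)
  have hg : ∀ i, (g i).toWord.head? = some ℓ :=
    fun i => (hH.toWord_head?_eq h1 (hgH ⟨i, rfl⟩) hh).trans hℓ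
  have hK : ∀ z ∈ K, FreeGroup.norm z ≤ rad := fun z hz => by
    simpa [wball, wordLen, FreeGroup.norm] using hcenter hz
  have := hrad.2 (rad - 1) ⟨FreeGroup.mk [ℓ], fun z hz => Nat.le_sub_one_of_lt
    (FreeGroup.norm_mk_singleton_inv_mul_lt_of_subset_iUnion_smul hK hg hcover hz)⟩
  omega

/-- if a finite connected set `K` of radius `rad ≥ 1` centered at the
identity satisfies `K ⊆ ⋃ᵢ gᵢ·K` with all `gᵢ ≠ e`, then `e` lies in the convex
hull of `{g₁,…,g_n}`. -/
theorem center_mem_hull_of_cover {r n : ℕ} (K : Set (FreeGroup (Fin r)))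
    (hKfin : K.Finite) (hKconn : ConnSet K) (rad : ℕ) (hrad : IsRadius K rad)
    (hrad1 : 1 ≤ rad) (hcenter : K ⊆ wball 1 rad)
    (g : Fin n → FreeGroup (Fin r)) (hg : ∀ i, g i ≠ 1)
    (hcover : K ⊆ ⋃ i, g i • K) :
    ∀ H, IsHull (Set.range g) H → (1 : FreeGroup (Fin r)) ∈ H :=
  center_mem_hull_of_cover_general K rad hrad hrad1 hcenter g hcover
end

section
/- Let Γ act by measure-preserving transformations α on (X, B_X, ν), by group-automorphisms β on a compact group G with Haar measure μ, with cocycle σ, and form the skew product α ×_σ β on X × G. Let P be a generating partition for α and Q = {gN : g ∈ G} a special partition of G. Let Σ(P,Q) be the smallest (α×_σβ)(Γ)-invariant σ-algebra containing P × Q, and Σ(Q) the smallest β(Γ)-invariant sub-σ-algebra of B_G containing Q. Then Σ(P,Q) equals the smallest σ-algebra containing B_X × Σ(Q), up to sets of measure zero. -/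
open scoped Pointwise

open MeasureTheory

/-- A countable measurable partition. -/
def IsPartition {Ω : Type*} [MeasurableSpace Ω] (P : Set (Set Ω)) : Prop :=
  P.Countable ∧ (∀ A ∈ P, MeasurableSet A) ∧ P.PairwiseDisjoint id ∧ ⋃₀ P = Set.univ

/-- The coset partition `{gN : g ∈ G}`. -/
def cosetPart {G : Type*} [Group G] (N : Subgroup G) : Set (Set G) :=
  Set.range (fun g : G => g • (N : Set G))

/-- Two σ-algebras agree up to `μ`-null sets. -/
def EqModNull {Ω : Type*} [MeasurableSpace Ω] (μ : MeasureTheory.Measure Ω)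
    (m₁ m₂ : MeasurableSpace Ω) : Prop :=
  (∀ A, MeasurableSet[m₁] A → ∃ B, MeasurableSet[m₂] B ∧ μ (symmDiff A B) = 0) ∧
  (∀ B, MeasurableSet[m₂] B → ∃ A, MeasurableSet[m₁] A ∧ μ (symmDiff A B) = 0)

/-!
Modulo `N`, the second coordinate of `T_g (x, h) = (α_g x, β_g h · σ_g x)` lies in the coset
`β_g(h) σ_g(x) N`, so `Σ(P,Q)` is generated by the maps `x ↦ α_g x` (read through `P`) and
`(x, h) ↦ β_g(h) σ_g(x) N` into the finite discrete group `G ⧸ N`. As `σ_g` is measurable, both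
are measurable for `B_X ⊗ Σ(Q)`. Conversely, the maps `α_g` generate `B_X` modulo null sets
because `P` is generating, so `σ_g(x) N` is known modulo null sets, and then
`β_g(h) N = (β_g(h) σ_g(x) N) (σ_g(x) N)⁻¹` recovers `Σ(Q)`.
-/

open MeasurableSpace

section NullClosure

variable {Ω Ω' : Type*} {m m₁ m₂ : MeasurableSpace Ω} [MeasurableSpace Ω]

@[reducible]
def nullClosure (μ : Measure Ω) (m : MeasurableSpace Ω) : MeasurableSpace Ω where
  MeasurableSet' s := ∃ t, MeasurableSet[m] t ∧ t =ᵐ[μ] s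
  measurableSet_empty := ⟨∅, @MeasurableSet.empty _ m, .rfl⟩
  measurableSet_compl _ := fun ⟨t, ht, hts⟩ => ⟨tᶜ, ht.compl, hts.compl⟩
  measurableSet_iUnion _ hf := by
    choose t ht hts using hf
    exact ⟨⋃ i, t i, .iUnion ht, .countable_iUnion hts⟩

variable {μ : Measure Ω}

lemma le_nullClosure : m ≤ nullClosure μ m := fun s hs => ⟨s, hs, .rfl⟩

lemma nullClosure_mono (h : m₁ ≤ m₂) : nullClosure μ m₁ ≤ nullClosure μ m₂ :=
  fun _ ⟨t, ht, hts⟩ => ⟨t, h t ht, hts⟩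

lemma comap_nullClosure_le {m : MeasurableSpace Ω'} [MeasurableSpace Ω'] {ν : Measure Ω'}
    {f : Ω → Ω'} (hf : Measure.QuasiMeasurePreserving f μ ν) :
    (nullClosure ν m).comap f ≤ nullClosure μ (m.comap f) := by
  rintro _ ⟨s, ⟨t, ht, hts⟩, rfl⟩
  exact ⟨f ⁻¹' t, ⟨t, ht, rfl⟩, hf.preimage_ae_eq hts⟩

lemma EqModNull.le_nullClosure (h : EqModNull μ m₁ m₂) : m₂ ≤ nullClosure μ m₁ :=
  fun B hB => let ⟨A, hA, hAB⟩ := h.2 B hB; ⟨A, hA, measure_symmDiff_eq_zero_iff.1 hAB⟩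

lemma EqModNull.of_le_of_le_nullClosure (h₁ : m₁ ≤ m₂) (h₂ : m₂ ≤ nullClosure μ m₁) :
    EqModNull μ m₁ m₂ :=
  ⟨fun A hA => ⟨A, h₁ A hA, by simp⟩,
    fun B hB => let ⟨A, hA, hAB⟩ := h₂ B hB; ⟨A, hA, measure_symmDiff_eq_zero_iff.2 hAB⟩⟩

end NullClosure

section Generation

variable {ι Ω X Y : Type*}

lemma generateFrom_preimages_eq_iSup_comap (f : ι → Ω → X) (S : Set (Set X)) :
    generateFrom {C | ∃ i, ∃ A ∈ S, C = f i ⁻¹' A} = ⨆ i, (generateFrom S).comap (f i) := by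
  simp_rw [comap_generateFrom, iSup_generateFrom]
  congr 1
  ext C
  simp [eq_comm]

lemma generateFrom_image2_prod_eq {P : Set (Set X)} {Q : Set (Set Y)}
    (hP : P.Countable) (hPU : ⋃₀ P = Set.univ) (hQ : Q.Countable) (hQU : ⋃₀ Q = Set.univ) :
    generateFrom (Set.image2 (· ×ˢ ·) P Q) =
      (generateFrom P).comap Prod.fst ⊔ (generateFrom Q).comap Prod.snd := by
  refine le_antisymm (generateFrom_le ?_) (sup_le ?_ ?_)
  · rintro _ ⟨A, hA, B, hB, rfl⟩
    exact @MeasurableSet.prod X Y (generateFrom P) (generateFrom Q) A B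
      (measurableSet_generateFrom hA) (measurableSet_generateFrom hB)
  · rw [comap_generateFrom]
    refine generateFrom_le ?_
    rintro _ ⟨A, hA, rfl⟩
    have : Prod.fst ⁻¹' A = ⋃ B ∈ Q, A ×ˢ B := by
      rw [← Set.prod_iUnion₂, ← Set.sUnion_eq_biUnion, hQU, Set.prod_univ]
    rw [this]
    exact .biUnion hQ fun B hB => measurableSet_generateFrom ⟨A, hA, B, hB, rfl⟩
  · rw [comap_generateFrom]
    refine generateFrom_le ?_
    rintro _ ⟨B, hB, rfl⟩
    have : Prod.snd ⁻¹' B = ⋃ A ∈ P, A ×ˢ B := by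
      rw [← Set.iUnion₂_prod_const, ← Set.sUnion_eq_biUnion, hPU, Set.univ_prod]
    rw [this]
    exact .biUnion hP fun A hA => measurableSet_generateFrom ⟨A, hA, B, hB, rfl⟩

lemma generateFrom_preimages_prod_eq_iSup_comap (T : ι → Ω → X × Y) {P : Set (Set X)}
    {Q : Set (Set Y)} (hP : P.Countable) (hPU : ⋃₀ P = Set.univ) (hQ : Q.Countable)
    (hQU : ⋃₀ Q = Set.univ) :
    generateFrom {C | ∃ i, ∃ A ∈ P, ∃ B ∈ Q, C = T i ⁻¹' (A ×ˢ B)} =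
      ⨆ i, (generateFrom P).comap (Prod.fst ∘ T i) ⊔ (generateFrom Q).comap (Prod.snd ∘ T i) := by
  have : {C | ∃ i, ∃ A ∈ P, ∃ B ∈ Q, C = T i ⁻¹' (A ×ˢ B)} =
      {C | ∃ i, ∃ R ∈ Set.image2 (· ×ˢ ·) P Q, C = T i ⁻¹' R} := by
    ext C
    simp
  simp_rw [this, generateFrom_preimages_eq_iSup_comap, generateFrom_image2_prod_eq hP hPU hQ hQU,
    comap_sup, comap_comp]

end Generation

section Cosets

variable {G : Type*} [Group G] (N : Subgroup G)

lemma cosetPart_eq_range_preimage_mk :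
    cosetPart N = Set.range fun c : G ⧸ N => QuotientGroup.mk ⁻¹' {c} := by
  rw [cosetPart, ← QuotientGroup.mk_surjective.range_comp]
  congr 1
  funext g
  exact (QuotientGroup.eq_class_eq_leftCoset N g).symm

lemma cosetPart_countable [Countable (G ⧸ N)] : (cosetPart N).Countable := by
  rw [cosetPart_eq_range_preimage_mk]
  exact Set.countable_range _

lemma sUnion_cosetPart : ⋃₀ cosetPart N = Set.univ := by
  rw [cosetPart_eq_range_preimage_mk, Set.sUnion_range, ← Set.preimage_iUnion,
    Set.iUnion_of_singleton, Set.preimage_univ]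

variable [MeasurableSpace G]

lemma measurableSingletonClass_quotient_of_isOpen [TopologicalSpace G] [ContinuousMul G]
    [BorelSpace G] (hN : IsOpen (N : Set G)) : MeasurableSingletonClass (G ⧸ N) := by
  refine ⟨fun c => ?_⟩
  induction c using QuotientGroup.induction_on with | H g => ?_
  change MeasurableSet {x : G | (x : G ⧸ N) = g}
  rw [QuotientGroup.eq_class_eq_leftCoset]
  exact (hN.smul g).measurableSet

lemma generateFrom_cosetPart [Countable (G ⧸ N)] [MeasurableSingletonClass (G ⧸ N)] :
    generateFrom (cosetPart N) = (inferInstance : MeasurableSpace (G ⧸ N)).comap (↑) := by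
  rw [cosetPart_eq_range_preimage_mk]
  refine le_antisymm (generateFrom_le ?_) ?_
  · rintro _ ⟨c, rfl⟩
    exact comap_measurable _ (measurableSet_singleton c)
  · rintro _ ⟨S, -, rfl⟩
    rw [← S.biUnion_of_singleton, Set.preimage_iUnion₂]
    exact .biUnion S.to_countable fun c _ => measurableSet_generateFrom ⟨c, rfl⟩

end Cosets

section SkewProduct

variable {Γ X G : Type*} [Group G] (α : Γ → X → X) (β : Γ → G → G) (σ : Γ → X → G)
  (N : Subgroup G) (P : Set (Set X))

def skewProduct (g : Γ) (q : X × G) : X × G := (α g q.1, β g q.2 * σ g q.1)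

/-- `Σ(P,Q)`. -/
@[reducible]
def skewAlgebra : MeasurableSpace (X × G) :=
  generateFrom {C | ∃ g, ∃ A ∈ P, ∃ B ∈ cosetPart N, C = skewProduct α β σ g ⁻¹' (A ×ˢ B)}

/-- `Σ(Q)`. -/
@[reducible]
def cosetAlgebra : MeasurableSpace G :=
  generateFrom {B' | ∃ g, ∃ B ∈ cosetPart N, B' = β g ⁻¹' B}

variable [MeasurableSpace G] [Countable (G ⧸ N)] [MeasurableSingletonClass (G ⧸ N)]

lemma comap_snd_cosetAlgebra :
    (cosetAlgebra β N).comap Prod.snd =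
      ⨆ g, (inferInstance : MeasurableSpace (G ⧸ N)).comap fun q : X × G => (β g q.2 : G ⧸ N) := by
  rw [cosetAlgebra, generateFrom_preimages_eq_iSup_comap, generateFrom_cosetPart, comap_iSup]
  simp_rw [comap_comp]
  rfl

variable [N.Normal] {P}

lemma skewAlgebra_eq_iSup (hP : P.Countable) (hPU : ⋃₀ P = Set.univ) :
    skewAlgebra α β σ N P = ⨆ g, (generateFrom P).comap (α g ∘ Prod.fst) ⊔
      (inferInstance : MeasurableSpace (G ⧸ N)).comap fun q => (β g q.2 : G ⧸ N) * σ g q.1 := by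
  rw [skewAlgebra, generateFrom_preimages_prod_eq_iSup_comap _ hP hPU
    (cosetPart_countable N) (sUnion_cosetPart N), generateFrom_cosetPart]
  simp_rw [comap_comp]
  rfl

variable [mX : MeasurableSpace X]

lemma skewAlgebra_le (hP : P.Countable) (hPU : ⋃₀ P = Set.univ)
    (hPm : ∀ A ∈ P, MeasurableSet A) (hα : ∀ g, Measurable (α g)) (hσ : ∀ g, Measurable (σ g)) :
    skewAlgebra α β σ N P ≤ mX.comap Prod.fst ⊔ (cosetAlgebra β N).comap Prod.snd := by
  rw [skewAlgebra_eq_iSup α β σ N hP hPU, comap_snd_cosetAlgebra]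
  refine iSup_le fun g => sup_le ?_ ?_
  · rw [← comap_comp]
    exact le_sup_of_le_left (comap_mono ((comap_mono (generateFrom_le hPm)).trans (hα g).comap_le))
  · refine measurable_iff_comap_le.1 (Measurable.fun_mul ?_ ?_)
    · exact (comap_measurable _).mono (le_sup_of_le_right (le_iSup_of_le g le_rfl)) le_rfl
    · exact ((QuotientGroup.measurable_coe.comp (hσ g)).comp (comap_measurable Prod.fst)).mono
        le_sup_left le_rfl

lemma comap_fst_le_nullClosure_skewAlgebra {ν : Measure X} (μ : Measure G)
    (hP : P.Countable) (hPU : ⋃₀ P = Set.univ)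
    (hgen : mX ≤ nullClosure ν (generateFrom {C | ∃ g, ∃ A ∈ P, C = α g ⁻¹' A})) :
    mX.comap Prod.fst ≤ nullClosure (ν.prod μ) (skewAlgebra α β σ N P) := by
  refine (comap_mono hgen).trans ((comap_nullClosure_le Measure.quasiMeasurePreserving_fst).trans
    (nullClosure_mono ?_))
  rw [generateFrom_preimages_eq_iSup_comap, comap_iSup, skewAlgebra_eq_iSup α β σ N hP hPU]
  exact iSup_mono fun g => comap_comp.trans_le le_sup_left

lemma comap_snd_cosetAlgebra_le_nullClosure {ρ : Measure (X × G)}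
    (hP : P.Countable) (hPU : ⋃₀ P = Set.univ) (hσ : ∀ g, Measurable (σ g))
    (hfst : mX.comap Prod.fst ≤ nullClosure ρ (skewAlgebra α β σ N P)) :
    (cosetAlgebra β N).comap Prod.snd ≤ nullClosure ρ (skewAlgebra α β σ N P) := by
  rw [comap_snd_cosetAlgebra]
  refine iSup_le fun g => measurable_iff_comap_le.1 ?_
  have hskew : Measurable[nullClosure ρ (skewAlgebra α β σ N P)]
      fun q : X × G => (β g q.2 : G ⧸ N) * σ g q.1 := by
    refine (comap_measurable _).mono (le_trans ?_ le_nullClosure) le_rfl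
    rw [skewAlgebra_eq_iSup α β σ N hP hPU]
    exact le_iSup_of_le g le_sup_right
  have hcocycle : Measurable[nullClosure ρ (skewAlgebra α β σ N P)]
      fun q : X × G => (σ g q.1 : G ⧸ N) :=
    ((QuotientGroup.measurable_coe.comp (hσ g)).comp (comap_measurable Prod.fst)).mono hfst le_rfl
  simpa using hskew.fun_div hcocycle

end SkewProduct

theorem skew_invariant_sigma_algebra_general {Γ X G : Type*}
    [mX : MeasurableSpace X] [Group G] [TopologicalSpace G] [IsTopologicalGroup G]
    [mG : MeasurableSpace G] [BorelSpace G]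
    (ν : Measure X)
    (μ : Measure G)
    (α : Γ → X → X) (β : Γ → G → G) (σ : Γ → X → G)
    (hαmeas : ∀ g, Measurable (α g))
    (hσmeas : ∀ g, Measurable (σ g))
    (N : Subgroup G) [N.Normal] [N.FiniteIndex] (hN : IsClopen (N : Set G))
    (P : Set (Set X)) (hP : IsPartition P)
    -- `P` is generating for `α`: the smallest `α(Γ)`-invariant σ-algebra
    -- containing `P` is `B_X` up to `ν`-null sets.
    (hPgen : EqModNull ν
      (MeasurableSpace.generateFrom
        {C : Set X | ∃ g : Γ, ∃ A ∈ P, C = α g ⁻¹' A}) mX) :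
    EqModNull (ν.prod μ)
      (MeasurableSpace.generateFrom
        {C : Set (X × G) | ∃ g : Γ, ∃ A ∈ P, ∃ B ∈ cosetPart N,
          C = (fun q : X × G => (α g q.1, β g q.2 * σ g q.1)) ⁻¹' (A ×ˢ B)})
      ((MeasurableSpace.comap Prod.fst mX) ⊔
        (MeasurableSpace.comap Prod.snd
          (MeasurableSpace.generateFrom
            {B' : Set G | ∃ g : Γ, ∃ B ∈ cosetPart N, B' = β g ⁻¹' B}))) := by
  have := measurableSingletonClass_quotient_of_isOpen N hN.isOpen
  obtain ⟨hPc, hPm, -, hPU⟩ := hP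
  have hfst := comap_fst_le_nullClosure_skewAlgebra α β σ N μ hPc hPU hPgen.le_nullClosure
  exact .of_le_of_le_nullClosure (skewAlgebra_le α β σ N hPc hPU hPm hαmeas hσmeas)
    (sup_le hfst (comap_snd_cosetAlgebra_le_nullClosure α β σ N hPc hPU hσmeas hfst))

/-- with `P` a generating partition for `α`, `Q = {gN}` a special
partition of the totally disconnected compact group `G`, `Σ(P,Q)` the smallest
invariant σ-algebra containing `P × Q` for the skew product, and `Σ(Q)` the smallest
`β`-invariant σ-algebra containing `Q`, the σ-algebra `Σ(P,Q)` equals the smallest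
σ-algebra containing `B_X × Σ(Q)`, up to `ν×μ`-null sets. -/
theorem skew_invariant_sigma_algebra {Γ X G : Type*} [Group Γ] [Countable Γ]
    [mX : MeasurableSpace X] [Group G] [TopologicalSpace G] [IsTopologicalGroup G]
    [CompactSpace G] [TotallyDisconnectedSpace G]
    [TopologicalSpace.MetrizableSpace G] [mG : MeasurableSpace G] [BorelSpace G]
    (ν : Measure X) [IsProbabilityMeasure ν]
    (μ : Measure G) [IsProbabilityMeasure μ] [μ.IsHaarMeasure]
    (α : Γ → X → X) (β : Γ → G → G) (σ : Γ → X → G)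
    (hα1 : α 1 = id) (hαmul : ∀ g h, α (g * h) = α g ∘ α h)
    (hαmeas : ∀ g, Measurable (α g)) (hαmp : ∀ g, MeasurePreserving (α g) ν ν)
    (hβ1 : β 1 = id) (hβmul : ∀ g h, β (g * h) = β g ∘ β h)
    (hβhom : ∀ g (a b : G), β g (a * b) = β g a * β g b)
    (hβcont : ∀ g, Continuous (β g)) (hβbij : ∀ g, Function.Bijective (β g))
    (hσmeas : ∀ g, Measurable (σ g))
    (hcoc : ∀ g h x, σ (g * h) x = β g (σ h x) * σ g (α h x))
    (N : Subgroup G) [N.Normal] [N.FiniteIndex] (hN : IsClopen (N : Set G))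
    (P : Set (Set X)) (hP : IsPartition P)
    -- `P` is generating for `α`: the smallest `α(Γ)`-invariant σ-algebra
    -- containing `P` is `B_X` up to `ν`-null sets.
    (hPgen : EqModNull ν
      (MeasurableSpace.generateFrom
        {C : Set X | ∃ g : Γ, ∃ A ∈ P, C = α g ⁻¹' A}) mX) :
    EqModNull (ν.prod μ)
      (MeasurableSpace.generateFrom
        {C : Set (X × G) | ∃ g : Γ, ∃ A ∈ P, ∃ B ∈ cosetPart N,
          C = (fun q : X × G => (α g q.1, β g q.2 * σ g q.1)) ⁻¹' (A ×ˢ B)})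
      ((MeasurableSpace.comap Prod.fst mX) ⊔
        (MeasurableSpace.comap Prod.snd
          (MeasurableSpace.generateFrom
            {B' : Set G | ∃ g : Γ, ∃ B ∈ cosetPart N, B' = β g ⁻¹' B}))) :=
  skew_invariant_sigma_algebra_general (mX := mX) (mG := mG) ν μ α β σ hαmeas hσmeas N hN P hP hPgen
end
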